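/- arXiv:2412.20851 — 3 statements merged into one kernel-verified Lean document; each statement's English description precedes it below -/
import Mathlib

section
/- Let N be a positive integer, Δx > 0, W₀, …, W_{N−1} ∈ ℝ, b ∈ ℝ, and define the one-hidden-layer network u_θ(x) = Σ_{k=0}^{N−1} W_k · Re-σ((2/Δx)·x − 2k) + b. Then for every integer m with 0 ≤ m ≤ N−1, u_θ is differentiable at x_m = m·Δx and its derivative there equals W_m / Δx. -/
/-- The rectified sigmoid function. -/
noncomputable def reSigma (x : ℝ) : ℝ :=
  if x < -1 then 0 else if x ≤ 1 then (x + 1) / 2 else 1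

lemma reSigma_of_gt {x : ℝ} (h : 1 < x) : reSigma x = 1 := by
  unfold reSigma
  rw [if_neg (by linarith), if_neg (by linarith)]

lemma reSigma_of_lt {x : ℝ} (h : x < -1) : reSigma x = 0 := if_pos h

lemma reSigma_of_mem {x : ℝ} (h1 : -1 ≤ x) (h2 : x ≤ 1) : reSigma x = (x + 1) / 2 := by
  unfold reSigma
  rw [if_neg (by linarith), if_pos h2]

/-- For the one-hidden-layer network u_θ(x) = Σ_{k<N} W_k·Re-σ((2/Δx)·x − 2k) + b,
at every grid point x_m = m·Δx with 0 ≤ m ≤ N−1 the network is differentiable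
with derivative W_m / Δx. -/
theorem network_deriv_at_grid_points
    (N : ℕ) (hN : 0 < N) (Δx : ℝ) (hΔx : 0 < Δx) (W : ℕ → ℝ) (b : ℝ)
    (m : ℕ) (hm : m ≤ N - 1) :
    HasDerivAt
      (fun x : ℝ => (∑ k ∈ Finset.range N,
        W k * reSigma ((2 / Δx) * x - 2 * (k : ℝ))) + b)
      (W m / Δx) ((m : ℝ) * Δx) := by
  have hm' : m < N := lt_of_le_of_lt hm (Nat.sub_lt hN one_pos)
  set x₀ : ℝ := (m : ℝ) * Δx with hx₀
  have key : ∀ k ∈ Finset.range N,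
      HasDerivAt (fun x : ℝ => W k * reSigma ((2 / Δx) * x - 2 * (k : ℝ)))
        (if k = m then W m / Δx else 0) x₀ := by
    intro k _
    have hf : HasDerivAt (fun x : ℝ => (2 / Δx) * x - 2 * (k : ℝ)) (2 / Δx) x₀ := by
      simpa using ((hasDerivAt_id x₀).const_mul (2 / Δx)).sub_const (2 * (k : ℝ))
    have hfx : (2 / Δx) * x₀ - 2 * (k : ℝ) = 2 * ((m : ℝ) - (k : ℝ)) := by
      rw [hx₀]; field_simp
    have hcont : ContinuousAt (fun x : ℝ => (2 / Δx) * x - 2 * (k : ℝ)) x₀ :=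
      hf.continuousAt
    rcases lt_trichotomy k m with hk | hk | hk
    · -- locally reSigma = 1
      rw [if_neg (by omega)]
      have hval : (1 : ℝ) < (2 / Δx) * x₀ - 2 * (k : ℝ) := by
        rw [hfx]
        have : (k : ℝ) + 1 ≤ (m : ℝ) := by exact_mod_cast hk
        linarith
      have hev : (fun x : ℝ => W k * reSigma ((2 / Δx) * x - 2 * (k : ℝ)))
          =ᶠ[nhds x₀] fun _ => W k * 1 := by
        filter_upwards [hcont (Ioi_mem_nhds hval)] with x hx
        rw [reSigma_of_gt hx]
      exact (hasDerivAt_const x₀ (W k * 1)).congr_of_eventuallyEq hev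
    · -- linear region
      subst hk
      rw [if_pos rfl]
      have hval : (2 / Δx) * x₀ - 2 * (k : ℝ) = 0 := by rw [hfx]; ring
      have hmem : ((2 / Δx) * x₀ - 2 * (k : ℝ)) ∈ Set.Ioo (-1 : ℝ) 1 := by
        rw [hval]; constructor <;> norm_num
      have hg : HasDerivAt
          (fun x : ℝ => W k * (((2 / Δx) * x - 2 * (k : ℝ) + 1) / 2))
          (W k * ((2 / Δx) / 2)) x₀ :=
        ((hf.add_const 1).div_const 2).const_mul (W k)
      have hev : (fun x : ℝ => W k * reSigma ((2 / Δx) * x - 2 * (k : ℝ)))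
          =ᶠ[nhds x₀] fun x => W k * (((2 / Δx) * x - 2 * (k : ℝ) + 1) / 2) := by
        filter_upwards [hcont (Ioo_mem_nhds hmem.1 hmem.2)] with x hx
        rw [reSigma_of_mem (le_of_lt hx.1) (le_of_lt hx.2)]
      have : W k * ((2 / Δx) / 2) = W k / Δx := by
        field_simp
      rw [← this]
      exact hg.congr_of_eventuallyEq hev
    · -- locally reSigma = 0
      rw [if_neg (by omega)]
      have hval : (2 / Δx) * x₀ - 2 * (k : ℝ) < -1 := by
        rw [hfx]
        have : (m : ℝ) + 1 ≤ (k : ℝ) := by exact_mod_cast hk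
        linarith
      have hev : (fun x : ℝ => W k * reSigma ((2 / Δx) * x - 2 * (k : ℝ)))
          =ᶠ[nhds x₀] fun _ => W k * 0 := by
        filter_upwards [hcont (Iio_mem_nhds hval)] with x hx
        rw [reSigma_of_lt hx]
      exact (hasDerivAt_const x₀ (W k * 0)).congr_of_eventuallyEq hev
  have hsum := HasDerivAt.sum key
  have hval : (∑ k ∈ Finset.range N, if k = m then W m / Δx else 0) = W m / Δx := by
    rw [Finset.sum_ite_eq' (Finset.range N) m fun _ => W m / Δx,
      if_pos (Finset.mem_range.mpr hm')]
  rw [hval] at hsum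
  simpa only [Finset.sum_apply] using hsum.add_const b
end

section
/- Let N be a positive integer, Δx > 0, and let f₀, …, f_{N−1} ∈ ℝ be given residual values (the values N_l[u_m, x_m] of the ODE operator at the grid points). Set the output weights W_m = −Δx · f_m and let b ∈ ℝ be arbitrary, and define u_θ(x) = Σ_{k=0}^{N−1} W_k · Re-σ((2/Δx)·x − 2k) + b. Then for every integer m with 0 ≤ m ≤ N−1, u_θ is differentiable at x_m = m·Δx and satisfies the collocation equation u_θ'(x_m) + f_m = 0; i.e., the PIDD-initialized network has zero ODE residual at every collocation point. -/
lemma reSigma_deriv_mid {t : ℝ} (h1 : -1 < t) (h2 : t < 1) :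
    HasDerivAt reSigma (1/2) t := by
  have hg : HasDerivAt (fun x : ℝ => (x + 1) / 2) (1/2) t := by
    simpa using ((hasDerivAt_id t).add_const 1).div_const 2
  refine hg.congr_of_eventuallyEq ?_
  filter_upwards [Ioo_mem_nhds h1 h2] with x hx
  simp [reSigma, not_lt.2 hx.1.le, hx.2.le]

lemma reSigma_deriv_left {t : ℝ} (h : t < -1) : HasDerivAt reSigma 0 t := by
  refine (hasDerivAt_const t (0:ℝ)).congr_of_eventuallyEq ?_
  filter_upwards [Iio_mem_nhds h] with x hx
  have hx' : x < -1 := hx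
  simp [reSigma, hx']

lemma reSigma_deriv_right {t : ℝ} (h : 1 < t) : HasDerivAt reSigma 0 t := by
  refine (hasDerivAt_const t (1:ℝ)).congr_of_eventuallyEq ?_
  filter_upwards [Ioi_mem_nhds h] with x hx
  have h1 : ¬ x < -1 := by linarith [Set.mem_Ioi.mp hx]
  have h2 : ¬ x ≤ 1 := not_le.2 hx
  simp [reSigma, h1, h2]

/-- PIDD initialization: with output weights W_m = −Δx·f_m, the network
u_θ(x) = Σ_{k<N} W_k·Re-σ((2/Δx)·x − 2k) + b has zero ODE residual
u_θ'(x_m) + f_m = 0 at every collocation point x_m = m·Δx, 0 ≤ m ≤ N−1. -/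
theorem pidd_zero_residual_at_collocation_points
    (N : ℕ) (hN : 0 < N) (Δx : ℝ) (hΔx : 0 < Δx) (f : ℕ → ℝ) (b : ℝ)
    (W : ℕ → ℝ) (hW : ∀ m, W m = -Δx * f m)
    (m : ℕ) (hm : m ≤ N - 1) :
    DifferentiableAt ℝ
      (fun x : ℝ => (∑ k ∈ Finset.range N,
        W k * reSigma ((2 / Δx) * x - 2 * (k : ℝ))) + b) ((m : ℝ) * Δx) ∧
    deriv
      (fun x : ℝ => (∑ k ∈ Finset.range N,
        W k * reSigma ((2 / Δx) * x - 2 * (k : ℝ))) + b) ((m : ℝ) * Δx)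
      + f m = 0 := by
  have hΔx' : Δx ≠ 0 := ne_of_gt hΔx
  have hmN : m < N := by omega
  set x₀ : ℝ := (m : ℝ) * Δx with hx₀
  have hval : ∀ k : ℕ, (2 / Δx) * x₀ - 2 * (k : ℝ) = 2 * (m : ℝ) - 2 * (k : ℝ) := by
    intro k; field_simp [hx₀]; ring
  have key : ∀ k ∈ Finset.range N,
      HasDerivAt (fun x : ℝ => W k * reSigma ((2 / Δx) * x - 2 * (k : ℝ)))
        (if k = m then W k / Δx else 0) x₀ := by
    intro k _
    have hinner : HasDerivAt (fun x : ℝ => (2 / Δx) * x - 2 * (k : ℝ)) (2 / Δx) x₀ := by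
      simpa using ((hasDerivAt_id x₀).const_mul (2 / Δx)).sub_const (2 * (k : ℝ))
    by_cases hk : k = m
    · subst hk
      have hmid : HasDerivAt reSigma (1/2) ((2 / Δx) * x₀ - 2 * (k : ℝ)) := by
        rw [hval k]; simp only [sub_self]
        exact reSigma_deriv_mid (by norm_num) (by norm_num)
      have := (hmid.comp x₀ hinner).const_mul (W k)
      simp only [if_pos rfl]
      rw [show W k / Δx = W k * (1 / 2 * (2 / Δx)) by ring]
      exact this
    · rcases lt_or_gt_of_ne (fun h : (k:ℝ) = (m:ℝ) => hk (by exact_mod_cast h)) with h | h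
      · -- k < m : argument ≥ 2 > 1
        have harg : 1 < (2 / Δx) * x₀ - 2 * (k : ℝ) := by
          rw [hval k]
          have : (k : ℝ) + 1 ≤ (m : ℝ) := by
            have : k < m := by exact_mod_cast h
            exact_mod_cast this
          linarith
        have houter := reSigma_deriv_right harg
        have := (houter.comp x₀ hinner).const_mul (W k)
        simpa [if_neg hk] using this
      · have harg : (2 / Δx) * x₀ - 2 * (k : ℝ) < -1 := by
          rw [hval k]
          have : (m : ℝ) + 1 ≤ (k : ℝ) := by
            have : m < k := by exact_mod_cast h
            exact_mod_cast this
          linarith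
        have houter := reSigma_deriv_left harg
        have := (houter.comp x₀ hinner).const_mul (W k)
        simpa [if_neg hk] using this
  have hsum : HasDerivAt
      (fun x : ℝ => (∑ k ∈ Finset.range N, W k * reSigma ((2 / Δx) * x - 2 * (k : ℝ))) + b)
      (∑ k ∈ Finset.range N, if k = m then W k / Δx else 0) x₀ :=
    (HasDerivAt.fun_sum key).add_const b
  have hsval : (∑ k ∈ Finset.range N, if k = m then W k / Δx else 0) = W m / Δx := by
    rw [Finset.sum_ite_eq' (Finset.range N) m (fun k => W k / Δx)]
    simp [Finset.mem_range.mpr hmN]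
  rw [hsval] at hsum
  refine ⟨hsum.differentiableAt, ?_⟩
  rw [hsum.deriv, hW m]
  field_simp
  ring
end

section
/- Let N be a positive integer, Δx > 0, f₀, …, f_{N−1} ∈ ℝ, and define the PIDD-initialized network u_θ(x) = Σ_{k=0}^{N−1} W_k · Re-σ((2/Δx)·x − 2k) + b with output weights W_k = −Δx · f_k and output bias b = u₀ − Σ_{k=0}^{N−1} W_k · Re-σ(−2k). Then at every grid point x_m = m·Δx with 1 ≤ m ≤ N−1, the network value equals the trapezoidal quadrature of −f: u_θ(x_m) = u₀ − Δx · ( f₀/2 + Σ_{k=1}^{m−1} f_k + f_m/2 ). -/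
lemma reSigma_zero : reSigma 0 = 1 / 2 := by norm_num [reSigma]

/-- The PIDD-initialized network with output weights W_k = −Δx·f_k and bias
b = u₀ − Σ_k W_k·Re-σ(−2k) takes, at every grid point x_m = m·Δx with
1 ≤ m ≤ N−1, the trapezoidal-rule value
u₀ − Δx·(f₀/2 + Σ_{k=1}^{m−1} f_k + f_m/2). -/
theorem pidd_network_is_trapezoidal_rule
    (N : ℕ) (hN : 0 < N) (Δx : ℝ) (hΔx : 0 < Δx) (f : ℕ → ℝ) (u₀ : ℝ)
    (W : ℕ → ℝ) (hW : ∀ k, W k = -Δx * f k) (b : ℝ)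
    (hb : b = u₀ - ∑ k ∈ Finset.range N, W k * reSigma (-(2 * (k : ℝ))))
    (m : ℕ) (hm1 : 1 ≤ m) (hm2 : m ≤ N - 1) :
    (∑ k ∈ Finset.range N,
        W k * reSigma ((2 / Δx) * ((m : ℝ) * Δx) - 2 * (k : ℝ))) + b
      = u₀ - Δx * (f 0 / 2 + (∑ k ∈ Finset.Ico 1 m, f k) + f m / 2) := by
  have hmN : m < N := by omega
  have harg : ∀ k : ℕ, (2 / Δx) * ((m : ℝ) * Δx) - 2 * (k : ℝ)
      = 2 * (m : ℝ) - 2 * (k : ℝ) := by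
    intro k; field_simp
  -- bias sum: only k = 0 contributes
  have hbsum : (∑ k ∈ Finset.range N, W k * reSigma (-(2 * (k : ℝ)))) = W 0 / 2 := by
    rw [Finset.sum_eq_single 0]
    · rw [show (-(2 * ((0:ℕ):ℝ))) = 0 by norm_num, reSigma_zero]; ring
    · intro k _ hk
      have hk1 : (1 : ℝ) ≤ (k : ℝ) := by exact_mod_cast Nat.one_le_iff_ne_zero.mpr hk
      rw [reSigma_of_lt (by linarith), mul_zero]
    · intro h; exact absurd (Finset.mem_range.mpr hN) h
  -- main sum
  have hmain : (∑ k ∈ Finset.range N,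
      W k * reSigma ((2 / Δx) * ((m : ℝ) * Δx) - 2 * (k : ℝ)))
      = (∑ k ∈ Finset.range m, W k) + W m / 2 := by
    simp only [harg]
    have hsplit : Finset.range N = Finset.range (m + 1) ∪ Finset.Ico (m + 1) N := by
      rw [Finset.range_eq_Ico, Finset.range_eq_Ico,
        Finset.Ico_union_Ico_eq_Ico (Nat.zero_le _) (show m + 1 ≤ N from hmN)]
    rw [hsplit, Finset.sum_union (by
      rw [Finset.range_eq_Ico]
      exact Finset.Ico_disjoint_Ico_consecutive 0 (m + 1) N)]
    have htail : (∑ k ∈ Finset.Ico (m + 1) N,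
        W k * reSigma (2 * (m : ℝ) - 2 * (k : ℝ))) = 0 := by
      apply Finset.sum_eq_zero
      intro k hk
      have : (m : ℝ) + 1 ≤ (k : ℝ) := by exact_mod_cast (Finset.mem_Ico.mp hk).1
      rw [reSigma_of_lt (by linarith), mul_zero]
    rw [htail, add_zero, Finset.sum_range_succ]
    have hmid : (2 : ℝ) * (m : ℝ) - 2 * (m : ℝ) = 0 := by ring
    rw [hmid, reSigma_zero]
    congr 1
    · apply Finset.sum_congr rfl
      intro k hk
      have : (k : ℝ) + 1 ≤ (m : ℝ) := by exact_mod_cast Finset.mem_range.mp hk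
      rw [reSigma_of_gt (by linarith), mul_one]
    · ring
  have hhead : (∑ k ∈ Finset.range m, W k) = W 0 + ∑ k ∈ Finset.Ico 1 m, W k := by
    rw [Finset.range_eq_Ico, Finset.sum_eq_sum_Ico_succ_bot hm1]
  have hWsum : (∑ k ∈ Finset.Ico 1 m, W k) = -Δx * ∑ k ∈ Finset.Ico 1 m, f k := by
    rw [Finset.mul_sum]
    exact Finset.sum_congr rfl fun k _ => hW k
  rw [hmain, hb, hbsum, hhead, hWsum, hW 0, hW m]
  ring
end
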